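/- arXiv:1704.03954 — 9 statements merged into one kernel-verified Lean document; each statement's English description precedes it below -/
import Mathlib

section
/- Let (C^1, …, C^k) be an admissible family in ℝ^n. Then for every x ∈ ℝ^n the following are equivalent: (i) x ∈ ⋃_{i=1}^k C^i; (ii) there exist x^1, …, x^k ∈ ℝ^n and y ∈ {0,1}^k such that Σ_{i=1}^k y_i = 1, Σ_{i=1}^k x^i = x, and for every i ∈ {1,…,k}: if y_i = 1 then x^i ∈ C^i, and if y_i = 0 then x^i ∈ rec(C^i). (This is the validity of the extended MIP formulation (2), with the gauge inequalities γ_{C^i−b^i}(x^i − b^i y_i) ≤ y_i rewritten, for binary y, as the stated membership conditions.) -/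
open Pointwise Set

noncomputable section

/-- The recession cone of a set. -/
def recCone {E : Type*} [AddCommGroup E] [Module ℝ E] (S : Set E) : Set E :=
  {d | ∀ x ∈ S, ∀ t : ℝ, 0 ≤ t → x + t • d ∈ S}

/-- An admissible family: each member is a nonempty closed convex set and all members share
the same recession cone. -/
def Admissible {n k : ℕ} (C : Fin k → Set (Fin n → ℝ)) : Prop :=
  (∀ i, (C i).Nonempty) ∧ (∀ i, IsClosed (C i)) ∧ (∀ i, Convex ℝ (C i)) ∧
    ∀ i j, recCone (C i) = recCone (C j)

/-! A binary vector `y` with `∑ i, y i = 1` singles out one index `i₀`, so `x = xs i₀ + ∑_{i ≠ i₀} xs i`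
is a point of `C i₀` moved along directions of the common recession cone. -/

section RecCone

variable {E ι : Type*} [AddCommGroup E] [Module ℝ E] {S : Set E}

lemma zero_mem_recCone (S : Set E) : (0 : E) ∈ recCone S := by
  intro z hz t _
  simpa using hz

lemma add_mem_recCone {d e : E} (hd : d ∈ recCone S) (he : e ∈ recCone S) :
    d + e ∈ recCone S := by
  intro z hz t ht
  simpa only [smul_add, add_assoc] using he _ (hd z hz t ht) t ht

lemma sum_mem_recCone {s : Finset ι} {d : ι → E} (hd : ∀ i ∈ s, d i ∈ recCone S) :
    ∑ i ∈ s, d i ∈ recCone S :=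
  Finset.sum_induction d (· ∈ recCone S) (fun _ _ => add_mem_recCone) (zero_mem_recCone S) hd

lemma add_mem_of_mem_recCone {z d : E} (hz : z ∈ S) (hd : d ∈ recCone S) : z + d ∈ S := by
  simpa using hd z hz 1 zero_le_one

end RecCone

lemma exists_eq_one_iff_of_sum_eq_one {ι : Type*} [Fintype ι] {y : ι → ℝ}
    (h01 : ∀ i, y i = 0 ∨ y i = 1) (hsum : ∑ i, y i = 1) : ∃ i₀, ∀ i, y i = 1 ↔ i = i₀ := by
  classical
  have hcard : ((Finset.univ.filter fun i => y i = 1).card : ℝ) = ∑ i, y i := by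
    rw [← Finset.sum_boole]
    refine Finset.sum_congr rfl fun i _ => ?_
    rcases h01 i with h | h <;> simp [h]
  obtain ⟨i₀, hi₀⟩ := Finset.card_eq_one.1 (by exact_mod_cast hcard.trans hsum)
  exact ⟨i₀, fun i => by simpa using Finset.ext_iff.1 hi₀ i⟩

/-- Validity of the extended MIP formulation (2). -/
theorem stmt0 {n k : ℕ} (C : Fin k → Set (Fin n → ℝ)) (hC : Admissible C)
    (x : Fin n → ℝ) :
    (x ∈ ⋃ i, C i) ↔
      ∃ (xs : Fin k → Fin n → ℝ) (y : Fin k → ℝ),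
        (∀ i, y i = 0 ∨ y i = 1) ∧ (∑ i, y i = 1) ∧ (∑ i, xs i = x) ∧
        (∀ i, (y i = 1 → xs i ∈ C i) ∧ (y i = 0 → xs i ∈ recCone (C i))) := by
  constructor
  · rintro ⟨_, ⟨i₀, rfl⟩, hx⟩
    refine ⟨Pi.single i₀ x, Pi.single i₀ 1, fun i => ?_, by simp, by simp, fun i => ?_⟩
    · by_cases h : i = i₀ <;> simp [h]
    · by_cases h : i = i₀
      · subst h; simpa using hx
      · simpa [h] using zero_mem_recCone (C i)
  · rintro ⟨xs, y, h01, hsum, rfl, hmem⟩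
    obtain ⟨i₀, hi₀⟩ := exists_eq_one_iff_of_sum_eq_one h01 hsum
    have hrec : ∀ i ∈ Finset.univ.erase i₀, xs i ∈ recCone (C i₀) := fun i hi =>
      hC.2.2.2 i i₀ ▸ (hmem i).2 ((h01 i).resolve_right
        fun h => Finset.ne_of_mem_erase hi ((hi₀ i).1 h))
    rw [← Finset.add_sum_erase _ _ (Finset.mem_univ i₀)]
    exact mem_iUnion.2 ⟨i₀, add_mem_of_mem_recCone ((hmem i₀).1 ((hi₀ i₀).2 rfl))
      (sum_mem_recCone hrec)⟩
end
end

section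
/- Let (C^1, …, C^k) be an admissible family in ℝ^n, let b^i ∈ C^i for each i, and let M ∈ ℝ^{k×k} satisfy M_{i,i} = 1 and M_{i,j} ≥ 0 for all i, j, and for all i, j: if M_{i,j} > 0 then C^j ⊆ b^i + M_{i,j} • (C^i − b^i), and if M_{i,j} = 0 then C^j ⊆ b^i + rec(C^i). Then for every x ∈ ℝ^n: x ∈ ⋃_{i=1}^k C^i if and only if there exists y ∈ {0,1}^k with Σ_{j=1}^k y_j = 1 such that for every i, letting m_i := Σ_{j=1}^k M_{i,j} y_j, one has x ∈ b^i + m_i • (C^i − b^i) if m_i > 0, and x ∈ b^i + rec(C^i) if m_i = 0. (This is the validity of the Big-M formulation (4), with the gauge inequalities γ_{C^i−b^i}(x − b^i) ≤ Σ_j M_{i,j} y_j rewritten as the stated membership conditions.) -/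
open Pointwise Set

noncomputable section

/-- Validity of the Big-M formulation (4). -/
theorem stmt2 {n k : ℕ} (C : Fin k → Set (Fin n → ℝ)) (hC : Admissible C)
    (b : Fin k → Fin n → ℝ) (hb : ∀ i, b i ∈ C i)
    (M : Fin k → Fin k → ℝ) (hMdiag : ∀ i, M i i = 1) (hMnn : ∀ i j, 0 ≤ M i j)
    (hMpos : ∀ i j, 0 < M i j → C j ⊆ {x | ∃ c ∈ C i, x = b i + M i j • (c - b i)})
    (hMzero : ∀ i j, M i j = 0 → C j ⊆ {x | x - b i ∈ recCone (C i)})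
    (x : Fin n → ℝ) :
    (x ∈ ⋃ i, C i) ↔
      ∃ y : Fin k → ℝ, (∀ j, y j = 0 ∨ y j = 1) ∧ (∑ j, y j = 1) ∧
        ∀ i, (0 < ∑ j, M i j * y j →
                ∃ c ∈ C i, x = b i + (∑ j, M i j * y j) • (c - b i)) ∧
             ((∑ j, M i j * y j) = 0 → x - b i ∈ recCone (C i)) := by
  constructor
  · rintro ⟨_, ⟨j0, rfl⟩, hx⟩
    refine ⟨fun j => if j = j0 then 1 else 0, fun j => ?_, ?_, fun i => ?_⟩
    · by_cases h : j = j0 <;> simp [h]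
    · simp
    · have hsum : (∑ j, M i j * if j = j0 then 1 else 0) = M i j0 := by
        simp [mul_ite]
      rw [hsum]
      constructor
      · intro hpos
        exact hMpos i j0 hpos hx
      · intro hz
        exact hMzero i j0 hz hx
  · rintro ⟨y, hy01, hysum, hy⟩
    obtain ⟨j0, hj0⟩ : ∃ j0, y j0 = 1 := by
      by_contra h
      push_neg at h
      have : ∀ j, y j = 0 := fun j => (hy01 j).resolve_right (h j)
      simp [this] at hysum
    have hyind : ∀ j, y j = if j = j0 then 1 else 0 := by
      have hrest : ∑ j ∈ Finset.univ.erase j0, y j = 0 := by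
        have := Finset.add_sum_erase Finset.univ y (Finset.mem_univ j0)
        rw [hysum, hj0] at this
        linarith
      have hz : ∀ j ∈ Finset.univ.erase j0, y j = 0 := by
        intro j hj
        have hnn : ∀ j ∈ Finset.univ.erase j0, 0 ≤ y j := by
          intro j _; rcases hy01 j with h | h <;> simp [h]
        exact (Finset.sum_eq_zero_iff_of_nonneg hnn).mp hrest j hj
      intro j
      by_cases h : j = j0
      · simp [h, hj0]
      · simp [h, hz j (Finset.mem_erase.mpr ⟨h, Finset.mem_univ j⟩)]
    have hsum : (∑ j, M j0 j * y j) = 1 := by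
      have : ∀ j, M j0 j * y j = M j0 j * if j = j0 then 1 else 0 := fun j => by
        rw [hyind j]
      simp only [this, mul_ite, mul_one, mul_zero]
      simp [hMdiag j0]
    obtain ⟨c, hc, hxc⟩ := (hy j0).1 (by rw [hsum]; norm_num)
    rw [hsum] at hxc
    have : x = c := by
      rw [hxc, one_smul]; abel
    exact mem_iUnion.mpr ⟨j0, this ▸ hc⟩
end
end

section
/- Let C ⊆ ℝ^n be a closed convex set with 0 ∈ C, and let E ⊆ ℝ^n × ℝ be a closed convex cone with E ⊆ ℝ^n × [0, ∞). Define Epi(C) := {(x, y) ∈ ℝ^n × ℝ : (y > 0 and x ∈ y • C) or (y = 0 and x ∈ rec(C))}. Then E = Epi(C) if and only if both {x ∈ ℝ^n : (x, 1) ∈ E} = C and {x ∈ ℝ^n : (x, 0) ∈ E} = rec(C). (Epi(C) is exactly the epigraph of the gauge function γ_C of C.) -/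
open Pointwise Set

noncomputable section

/-- The epigraph of the gauge of `C`:
`{(x, y) : (y > 0 ∧ x ∈ y • C) ∨ (y = 0 ∧ x ∈ rec(C))}`. -/
def epiGauge {n : ℕ} (C : Set (Fin n → ℝ)) : Set ((Fin n → ℝ) × ℝ) :=
  {p | (0 < p.2 ∧ p.1 ∈ p.2 • C) ∨ (p.2 = 0 ∧ p.1 ∈ recCone C)}

/-- Characterization of the epigraph of the gauge among closed convex cones contained in
`ℝⁿ × [0, ∞)`. -/
theorem stmt3 {n : ℕ} (C : Set (Fin n → ℝ)) (hCc : IsClosed C) (hCconv : Convex ℝ C)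
    (h0 : (0 : Fin n → ℝ) ∈ C)
    (E : Set ((Fin n → ℝ) × ℝ)) (hEc : IsClosed E)
    (hEadd : ∀ a ∈ E, ∀ b ∈ E, a + b ∈ E)
    (hEsmul : ∀ t : ℝ, 0 ≤ t → ∀ a ∈ E, t • a ∈ E)
    (hEnn : ∀ p ∈ E, 0 ≤ p.2) :
    E = epiGauge C ↔
      ({x | (x, (1 : ℝ)) ∈ E} = C ∧ {x | (x, (0 : ℝ)) ∈ E} = recCone C) := by
  constructor
  · rintro rfl
    constructor
    · ext x
      simp [epiGauge, one_smul]
    · ext x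
      simp [epiGauge]
  · rintro ⟨h1, h0'⟩
    ext ⟨x, y⟩
    constructor
    · intro hxy
      have hy : 0 ≤ y := hEnn _ hxy
      rcases eq_or_lt_of_le hy with hy0 | hy0
      · right
        refine ⟨hy0.symm, ?_⟩
        rw [← h0']
        simpa [← hy0] using hxy
      · left
        refine ⟨hy0, ?_⟩
        have hz : ((y⁻¹ • x, (1 : ℝ)) : (Fin n → ℝ) × ℝ) ∈ E := by
          have := hEsmul y⁻¹ (by positivity) _ hxy
          simpa [Prod.smul_mk, inv_mul_cancel₀ hy0.ne'] using this
        have hc : y⁻¹ • x ∈ C := by rw [← h1]; exact hz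
        refine ⟨y⁻¹ • x, hc, ?_⟩
        simp [smul_smul, mul_inv_cancel₀ hy0.ne']
    · rintro (⟨hy, c, hc, hcx⟩ | ⟨rfl, hx⟩)
      · have hc1 : ((c, (1 : ℝ)) : (Fin n → ℝ) × ℝ) ∈ E := by rw [← h1] at hc; exact hc
        have := hEsmul y hy.le _ hc1
        simp only [Prod.smul_mk, smul_eq_mul, mul_one] at this
        have hx : y • c = x := hcx
        rwa [hx] at this
      · rw [← h0'] at hx
        exact hx
end
end

section
/- Let (C^1, …, C^k) be an admissible family in ℝ^n. Then for every (x, y) ∈ ℝ^n × ℝ^k such that every coordinate y_i is an integer: (x, y) ∈ Q(C^1,…,C^k) if and only if there exists i ∈ {1,…,k} with y = e^i and x ∈ C^i. In particular, x ∈ ⋃_{i=1}^k C^i if and only if there exists y ∈ ℤ^k with (x, y) ∈ Q(C^1,…,C^k). -/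
open Pointwise Set

noncomputable section

/-- The Cayley embedding `Q(C¹,…,Cᵏ) = conv(⋃ᵢ Cⁱ × {eⁱ})`. -/
def CayleyQ {n k : ℕ} (C : Fin k → Set (Fin n → ℝ)) :
    Set ((Fin n → ℝ) × (Fin k → ℝ)) :=
  convexHull ℝ (⋃ i, (C i) ×ˢ ({Pi.single i 1} : Set (Fin k → ℝ)))

/-- `(x, y) ∈ Q(C¹,…,Cᵏ), y ∈ ℤᵏ` is an ideal formulation of `x ∈ ⋃ᵢ Cⁱ`. -/
theorem stmt5 {n k : ℕ} (C : Fin k → Set (Fin n → ℝ)) (hC : Admissible C) :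
    (∀ (x : Fin n → ℝ) (y : Fin k → ℝ), (∀ i, ∃ z : ℤ, y i = z) →
      ((x, y) ∈ CayleyQ C ↔ ∃ i, y = Pi.single i 1 ∧ x ∈ C i)) ∧
    (∀ x : Fin n → ℝ, (x ∈ ⋃ i, C i) ↔
      ∃ y : Fin k → ℝ, (∀ i, ∃ z : ℤ, y i = z) ∧ (x, y) ∈ CayleyQ C) := by
  have heasy : ∀ (x : Fin n → ℝ) (i : Fin k), x ∈ C i →
      (x, (Pi.single i 1 : Fin k → ℝ)) ∈ CayleyQ C := by
    intro x i hxi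
    exact subset_convexHull ℝ _ (Set.mem_iUnion.2 ⟨i, ⟨hxi, rfl⟩⟩)
  have hint : ∀ (i : Fin k) (j : Fin k), ∃ z : ℤ, (Pi.single i 1 : Fin k → ℝ) j = z := by
    intro i j
    by_cases h : j = i
    · exact ⟨1, by subst h; simp⟩
    · exact ⟨0, by simp [Pi.single_apply, h]⟩
  have key : ∀ (x : Fin n → ℝ) (y : Fin k → ℝ), (∀ i, ∃ z : ℤ, y i = z) →
      ((x, y) ∈ CayleyQ C ↔ ∃ i, y = Pi.single i 1 ∧ x ∈ C i) := by
    intro x y hy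
    constructor
    · intro hmem
      rw [CayleyQ, convexHull_eq] at hmem
      obtain ⟨ι, t, w, z, hw0, hw1, hz, hx⟩ := hmem
      have ht : t.Nonempty := Finset.nonempty_of_sum_ne_zero (by rw [hw1]; norm_num)
      obtain ⟨j0, hj0⟩ := ht
      have hk : Nonempty (Fin k) := by
        obtain ⟨s, -⟩ := Set.mem_iUnion.1 (hz j0 hj0); exact ⟨s⟩
      have hchoice : ∀ j : ι, ∃ i : Fin k,
          j ∈ t → ((z j).1 ∈ C i ∧ (z j).2 = Pi.single i 1) := by
        intro j
        by_cases h : j ∈ t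
        · obtain ⟨i, hi⟩ := Set.mem_iUnion.1 (hz j h)
          exact ⟨i, fun _ => ⟨hi.1, hi.2⟩⟩
        · exact ⟨Classical.arbitrary _, fun h' => absurd h' h⟩
      choose σ hσ using hchoice
      have hxy : (x, y) = ∑ j ∈ t, w j • z j := by
        rw [← hx, Finset.centerMass_eq_of_sum_1 _ _ hw1]
      have hx' : x = ∑ j ∈ t, w j • (z j).1 := by
        have h1 := congrArg Prod.fst hxy
        simpa [Prod.fst_sum] using h1
      have hy2 : y = ∑ j ∈ t, w j • (z j).2 := by
        have h2 := congrArg Prod.snd hxy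
        simpa [Prod.snd_sum] using h2
      have hyi : ∀ i, y i = ∑ j ∈ t, w j * (Pi.single (σ j) 1 : Fin k → ℝ) i := by
        intro i
        rw [hy2]
        rw [Finset.sum_apply]
        refine Finset.sum_congr rfl fun j hj => ?_
        rw [(hσ j hj).2]
        simp
      have hy0 : ∀ i, 0 ≤ y i := by
        intro i
        rw [hyi]
        refine Finset.sum_nonneg fun j hj => mul_nonneg (hw0 j hj) ?_
        rw [Pi.single_apply]
        split <;> norm_num
      have hsum : ∑ i, y i = 1 := by
        calc ∑ i, y i = ∑ i, ∑ j ∈ t, w j * (Pi.single (σ j) 1 : Fin k → ℝ) i :=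
              Finset.sum_congr rfl fun i _ => hyi i
          _ = ∑ j ∈ t, ∑ i, w j * (Pi.single (σ j) 1 : Fin k → ℝ) i := Finset.sum_comm
          _ = ∑ j ∈ t, w j := Finset.sum_congr rfl fun j _ => by simp [Pi.single_apply]
          _ = 1 := hw1
      have hy1 : ∀ i, y i ≤ 1 := by
        intro i
        rw [← hsum]
        exact Finset.single_le_sum (fun i _ => hy0 i) (Finset.mem_univ i)
      have hbin : ∀ i, y i = 0 ∨ y i = 1 := by
        intro i
        obtain ⟨zi, hzi⟩ := hy i
        have h0 := hy0 i
        have h1 := hy1 i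
        rw [hzi] at h0 h1 ⊢
        have hz0 : (0:ℤ) ≤ zi := by exact_mod_cast h0
        have hz1 : zi ≤ 1 := by exact_mod_cast h1
        interval_cases zi
        · left; norm_num
        · right; norm_num
      obtain ⟨i₀, -, hi₀⟩ := Finset.exists_ne_zero_of_sum_ne_zero
        (by rw [hsum]; norm_num : ∑ i, y i ≠ 0)
      have hi₀1 : y i₀ = 1 := (hbin i₀).resolve_left hi₀
      have hyeq : y = Pi.single i₀ 1 := by
        funext i
        by_cases h : i = i₀
        · rw [h, hi₀1]; simp
        · have hle : y i₀ + y i ≤ ∑ j, y j := by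
            rw [← Finset.add_sum_erase _ _ (Finset.mem_univ i₀)]
            gcongr
            exact Finset.single_le_sum (fun j _ => hy0 j)
              (Finset.mem_erase.2 ⟨h, Finset.mem_univ i⟩)
          rw [hsum, hi₀1] at hle
          have : y i = 0 := le_antisymm (by linarith) (hy0 i)
          rw [this, Pi.single_apply, if_neg h]
      refine ⟨i₀, hyeq, ?_⟩
      have hwz : ∀ j ∈ t, σ j ≠ i₀ → w j = 0 := by
        intro j hj hne
        have hle : w j ≤ y (σ j) := by
          have h := Finset.single_le_sum
            (f := fun j' => w j' * (Pi.single (σ j') 1 : Fin k → ℝ) (σ j))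
            (fun j' hj' => mul_nonneg (hw0 j' hj')
              (by rw [Pi.single_apply]; split <;> norm_num)) hj
          rw [hyi (σ j)]
          simpa using h
        have hy0' : y (σ j) = 0 := by
          rw [hyeq, Pi.single_apply, if_neg hne]
        exact le_antisymm (hy0' ▸ hle) (hw0 j hj)
      set s := t.filter (fun j => σ j = i₀) with hs
      have hxs : x = ∑ j ∈ s, w j • (z j).1 := by
        rw [hx']
        symm
        refine Finset.sum_filter_of_ne fun j hj hne => ?_
        by_contra h
        exact hne (by rw [hwz j hj h, zero_smul])
      have hws : ∑ j ∈ s, w j = 1 := by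
        have : ∑ j ∈ s, w j = ∑ j ∈ t, w j * (Pi.single (σ j) 1 : Fin k → ℝ) i₀ := by
          rw [hs, Finset.sum_filter]
          refine Finset.sum_congr rfl fun j _ => ?_
          by_cases h : σ j = i₀
          · rw [if_pos h, h, Pi.single_eq_same, mul_one]
          · rw [if_neg h, Pi.single_apply, if_neg (Ne.symm h), mul_zero]
        rw [this, ← hyi i₀, hi₀1]
      rw [hxs]
      refine (hC.2.2.1 i₀).sum_mem (fun j hj => hw0 j (Finset.mem_filter.1 hj).1) hws
        fun j hj => ?_
      obtain ⟨hjt, hji⟩ := Finset.mem_filter.1 hj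
      exact hji ▸ (hσ j hjt).1
    · rintro ⟨i, rfl, hxi⟩
      exact heasy x i hxi
  refine ⟨key, fun x => ⟨?_, ?_⟩⟩
  · intro hx
    obtain ⟨i, hi⟩ := Set.mem_iUnion.1 hx
    exact ⟨Pi.single i 1, hint i, heasy x i hi⟩
  · rintro ⟨y, hyint, hmem⟩
    obtain ⟨i, -, hxi⟩ := (key x y hyint).1 hmem
    exact Set.mem_iUnion.2 ⟨i, hxi⟩
end
end

section
/- Let C^1, …, C^k ⊆ ℝ^n be nonempty convex sets. Then Q(C^1,…,C^k) = {(x, y) ∈ ℝ^n × ℝ^k : y ∈ Δ^k and x ∈ Σ_{i=1}^k y_i • C^i}, where Σ_{i=1}^k y_i • C^i is the Minkowski sum of the scaled sets y_i • C^i (so y_i • C^i = {0} when y_i = 0). Equivalently, for every y ∈ Δ^k the slice {x : (x, y) ∈ Q(C^1,…,C^k)} equals Σ_{i=1}^k y_i • C^i. -/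
open Pointwise Set

noncomputable section

/-- The Cayley embedding of nonempty convex sets is the set of `(x, y)` with `y` in the
standard simplex and `x` in the Minkowski sum `∑ᵢ yᵢ • Cⁱ`; equivalently, for each `y` in the
simplex, the slice of `Q` at `y` is `∑ᵢ yᵢ • Cⁱ`. -/
theorem stmt6 {n k : ℕ} (C : Fin k → Set (Fin n → ℝ))
    (hne : ∀ i, (C i).Nonempty) (hconv : ∀ i, Convex ℝ (C i)) :
    (CayleyQ C = {p : (Fin n → ℝ) × (Fin k → ℝ) |
        (∀ i, 0 ≤ p.2 i) ∧ (∑ i, p.2 i = 1) ∧ p.1 ∈ ∑ i, p.2 i • C i}) ∧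
    (∀ y : Fin k → ℝ, ((∀ i, 0 ≤ y i) ∧ ∑ i, y i = 1) →
      {x | (x, y) ∈ CayleyQ C} = ∑ i, y i • C i) := by
  have key : CayleyQ C = {p : (Fin n → ℝ) × (Fin k → ℝ) |
      (∀ i, 0 ≤ p.2 i) ∧ (∑ i, p.2 i = 1) ∧ p.1 ∈ ∑ i, p.2 i • C i} := by
    apply Subset.antisymm
    · apply convexHull_min
      · rintro ⟨x, y⟩ hp
        simp only [mem_iUnion, mem_prod, mem_singleton_iff] at hp
        obtain ⟨i, hx, rfl⟩ := hp
        refine ⟨fun j => ?_, by simp, ?_⟩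
        · rcases eq_or_ne j i with rfl | h
          · simp
          · simp [Pi.single_apply, h]
        · rw [Set.mem_fintype_sum]
          refine ⟨fun j => if h : j = i then x else 0, fun j => ?_, by simp⟩
          rcases eq_or_ne j i with rfl | h
          · simpa using hx
          · simp only [dif_neg h, Pi.single_apply, if_neg h]
            rw [zero_smul_set (hne j)]
            exact rfl
      · -- convexity of the RHS
        rintro ⟨x, y⟩ ⟨hy0, hy1, hx⟩ ⟨x', y'⟩ ⟨hy0', hy1', hx'⟩ a b ha hb hab
        refine ⟨fun i => add_nonneg (mul_nonneg ha (hy0 i)) (mul_nonneg hb (hy0' i)), ?_, ?_⟩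
        · simp only [Prod.snd_add, Prod.smul_snd, Pi.add_apply, Pi.smul_apply, smul_eq_mul]
          rw [Finset.sum_add_distrib, ← Finset.mul_sum, ← Finset.mul_sum, hy1, hy1']
          simpa using hab
        · rw [Set.mem_fintype_sum] at hx hx'
          obtain ⟨g, hg, hgx⟩ := hx
          obtain ⟨g', hg', hgx'⟩ := hx'
          rw [Set.mem_fintype_sum]
          refine ⟨fun i => a • g i + b • g' i, fun i => ?_, ?_⟩
          · obtain ⟨c, hc, hci⟩ := hg i
            obtain ⟨c', hc', hci'⟩ := hg' i
            simp only [Prod.snd_add, Prod.smul_snd, Pi.add_apply, Pi.smul_apply, smul_eq_mul]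
            rw [(hconv i).add_smul (mul_nonneg ha (hy0 i)) (mul_nonneg hb (hy0' i))]
            exact Set.add_mem_add ⟨c, hc, by rw [← hci, smul_smul]⟩
              ⟨c', hc', by rw [← hci', smul_smul]⟩
          · simp only [Prod.fst_add, Prod.smul_fst]
            rw [Finset.sum_add_distrib, ← Finset.smul_sum, ← Finset.smul_sum, hgx, hgx']
    · rintro ⟨x, y⟩ ⟨hy0, hy1, hx⟩
      rw [Set.mem_fintype_sum] at hx
      obtain ⟨g, hg, hgx⟩ := hx
      choose c hc hgc using fun i => hg i
      have hz : ∀ i : Fin k, ((c i, Pi.single i 1) : (Fin n → ℝ) × (Fin k → ℝ)) ∈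
          convexHull ℝ (⋃ i, (C i) ×ˢ ({Pi.single i 1} : Set (Fin k → ℝ))) := fun i =>
        subset_convexHull ℝ _ (mem_iUnion.2 ⟨i, ⟨hc i, rfl⟩⟩)
      have := (convex_convexHull ℝ _).sum_mem (t := Finset.univ)
        (fun i _ => hy0 i) hy1 (fun i _ => hz i)
      have heq : (∑ i, y i • ((c i, Pi.single i 1) : (Fin n → ℝ) × (Fin k → ℝ))) = (x, y) := by
        rw [Prod.ext_iff]
        constructor
        · simp only [Prod.fst_sum, Prod.smul_fst]
          exact (Finset.sum_congr rfl fun i _ => hgc i).trans hgx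
        · simp only [Prod.snd_sum, Prod.smul_snd]
          funext j
          simp [Finset.sum_apply, Pi.single_apply, mul_comm]
      rw [heq] at this
      exact this
  refine ⟨key, fun y hy => ?_⟩
  ext x
  simp only [key, mem_setOf_eq]
  exact ⟨fun h => h.2.2, fun h => ⟨hy.1, hy.2, h⟩⟩
end
end

section
/- Let C ⊆ ℝ^n be a closed convex set with 0 ∈ C, let b^1, …, b^k ∈ ℝ^n, and let r ∈ ℝ^k with r_i ≥ 0 for all i and r ≠ 0. Define C^i := r_i • C + b^i + rec(C) (Minkowski sums) for each i ∈ {1,…,k}. Then Q(C^1,…,C^k) = {(x, y) ∈ ℝ^n × ℝ^k : y ∈ Δ^k and x − Σ_{i=1}^k y_i b^i ∈ (Σ_{i=1}^k r_i y_i) • C + rec(C)}. (This is the gauge description (6): γ_C(x − Σ_i y_i b^i) ≤ Σ_i r_i y_i together with y ∈ Δ^k.) -/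
open Pointwise Set

noncomputable section

lemma recCone_add' {E : Type*} [AddCommGroup E] [Module ℝ E] {S : Set E} {d e : E}
    (hd : d ∈ recCone S) (he : e ∈ recCone S) : d + e ∈ recCone S := fun x hx t ht => by
  have := he (x + t • d) (hd x hx t ht) t ht
  simpa [smul_add, add_assoc] using this

lemma recCone_smul' {E : Type*} [AddCommGroup E] [Module ℝ E] {S : Set E} {d : E} {s : ℝ}
    (hs : 0 ≤ s) (hd : d ∈ recCone S) : s • d ∈ recCone S := fun x hx t ht => by
  have := hd x hx (t * s) (mul_nonneg ht hs)
  simpa [mul_smul] using this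


/-- The Cayley embedding of a nearly-homothetic family `Cⁱ = rᵢ • C + bⁱ + rec(C)` is
described by the gauge inequality (6). -/
theorem stmt7 {n k : ℕ} (C : Set (Fin n → ℝ)) (hCc : IsClosed C) (hCconv : Convex ℝ C)
    (h0 : (0 : Fin n → ℝ) ∈ C) (b : Fin k → Fin n → ℝ) (r : Fin k → ℝ)
    (hr : ∀ i, 0 ≤ r i) (hr0 : r ≠ 0) :
    CayleyQ (fun i => r i • C + {b i} + recCone C) =
      {p : (Fin n → ℝ) × (Fin k → ℝ) | (∀ i, 0 ≤ p.2 i) ∧ (∑ i, p.2 i = 1) ∧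
        p.1 - ∑ i, p.2 i • b i ∈ (∑ i, r i * p.2 i) • C + recCone C} := by
  apply Subset.antisymm
  · apply convexHull_min
    · rintro ⟨x, y⟩ hx
      simp only [mem_iUnion, mem_prod, mem_singleton_iff] at hx
      obtain ⟨i, hxi, rfl⟩ := hx
      rw [Set.mem_add] at hxi
      obtain ⟨u, hu, d, hd, rfl⟩ := hxi
      rw [Set.mem_add] at hu
      obtain ⟨w, hw, v, hv, rfl⟩ := hu
      rw [Set.mem_singleton_iff] at hv
      subst hv
      obtain ⟨c, hc, rfl⟩ := hw
      refine ⟨?_, ?_, ?_⟩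
      · intro j
        simp only [Pi.single_apply]
        split <;> norm_num
      · simp
      · have h1 : (∑ j, (Pi.single i 1 : Fin k → ℝ) j • b j) = b i := by
          simp [Pi.single_apply, ite_smul]
        have h2 : (∑ j, r j * (Pi.single i 1 : Fin k → ℝ) j) = r i := by
          simp [Pi.single_apply, mul_ite]
        simp only [h1, h2]
        refine ⟨r i • c, smul_mem_smul_set hc, d, hd, by abel⟩
    · rintro ⟨x, y⟩ ⟨hy0, hy1, hm⟩ ⟨x', y'⟩ ⟨hy0', hy1', hm'⟩ a a' ha ha' haa
      rw [Set.mem_add] at hm hm'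
      obtain ⟨u, hu, d, hd, hud⟩ := hm
      obtain ⟨u', hu', d', hd', hud'⟩ := hm'
      obtain ⟨c, hc, rfl⟩ := hu
      obtain ⟨c', hc', rfl⟩ := hu'
      set ρ := ∑ i, r i * y i with hρ
      set ρ' := ∑ i, r i * y' i with hρ'
      have hρ0 : 0 ≤ ρ := Finset.sum_nonneg fun i _ => mul_nonneg (hr i) (hy0 i)
      have hρ0' : 0 ≤ ρ' := Finset.sum_nonneg fun i _ => mul_nonneg (hr i) (hy0' i)
      refine ⟨?_, ?_, ?_⟩
      · intro j
        simp only [Prod.smul_snd, Prod.snd_add, Pi.add_apply, Pi.smul_apply, smul_eq_mul]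
        exact add_nonneg (mul_nonneg ha (hy0 j)) (mul_nonneg ha' (hy0' j))
      · simp only [Prod.smul_snd, Prod.snd_add, Pi.add_apply, Pi.smul_apply, smul_eq_mul]
        rw [Finset.sum_add_distrib, ← Finset.mul_sum, ← Finset.mul_sum, hy1, hy1']
        linarith
      · simp only [Prod.smul_fst, Prod.fst_add, Prod.smul_snd, Prod.snd_add, Pi.add_apply,
          Pi.smul_apply, smul_eq_mul]
        have hsum : (∑ i, r i * (a * y i + a' * y' i)) = a * ρ + a' * ρ' := by
          rw [hρ, hρ', Finset.mul_sum, Finset.mul_sum, ← Finset.sum_add_distrib]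
          congr 1; ext i; ring
        rw [hsum]
        have hveq : (a • x + a' • x') - ∑ i, (a * y i + a' * y' i) • b i
            = a • (x - ∑ i, y i • b i) + a' • (x' - ∑ i, y' i • b i) := by
          rw [smul_sub, smul_sub, Finset.smul_sum, Finset.smul_sum]
          rw [show (∑ i, (a * y i + a' * y' i) • b i)
              = (∑ i, a • y i • b i) + ∑ i, a' • y' i • b i by
            rw [← Finset.sum_add_distrib]; congr 1; ext i
            rw [add_smul, mul_smul, mul_smul]]
          abel
        rw [hveq, ← hud, ← hud']
        have hCmem : (a * ρ) • c + (a' * ρ') • c' ∈ (a * ρ + a' * ρ') • C := by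
          rw [hCconv.add_smul (mul_nonneg ha hρ0) (mul_nonneg ha' hρ0')]
          exact add_mem_add (smul_mem_smul_set hc) (smul_mem_smul_set hc')
        refine ⟨(a * ρ) • c + (a' * ρ') • c', hCmem, a • d + a' • d',
          recCone_add' (recCone_smul' ha hd) (recCone_smul' ha' hd'), ?_⟩
        rw [smul_add, smul_add, mul_smul, mul_smul]
        abel
  · rintro ⟨x, y⟩ ⟨hy0, hy1, hm⟩
    rw [Set.mem_add] at hm
    obtain ⟨u, hu, d, hd, hud⟩ := hm
    obtain ⟨c, hc, rfl⟩ := hu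
    set z : Fin k → (Fin n → ℝ) × (Fin k → ℝ) :=
      fun i => (r i • c + b i + d, Pi.single i 1) with hz
    have hzmem : ∀ i ∈ Finset.univ, z i ∈
        ⋃ j, ((fun j => r j • C + {b j} + recCone C) j) ×ˢ
          ({Pi.single j 1} : Set (Fin k → ℝ)) := by
      intro i _
      refine mem_iUnion.2 ⟨i, ⟨?_, rfl⟩⟩
      exact ⟨r i • c + b i, ⟨r i • c, smul_mem_smul_set hc, b i, rfl, rfl⟩, d, hd, rfl⟩
    have hcm := Finset.centerMass_mem_convexHull Finset.univ
      (fun i _ => hy0 i) (by rw [hy1]; exact one_pos) hzmem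
    rw [Finset.centerMass_eq_of_sum_1 _ _ hy1] at hcm
    have hxy : (x, y) = ∑ i, y i • z i := by
      have hfst : (∑ i, y i • z i).1 = x := by
        simp only [Prod.fst_sum, hz, Prod.smul_fst]
        have : (∑ i, y i • (r i • c + b i + d))
            = (∑ i, r i * y i) • c + (∑ i, y i • b i) + d := by
          rw [show (∑ i, y i • (r i • c + b i + d))
              = (∑ i, (r i * y i) • c) + (∑ i, y i • b i) + (∑ i, y i • d) by
            rw [← Finset.sum_add_distrib, ← Finset.sum_add_distrib]
            congr 1; ext i
            rw [smul_add, smul_add, smul_smul, mul_comm]]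
          rw [← Finset.sum_smul, ← Finset.sum_smul, hy1, one_smul]
        rw [this, ← sub_eq_iff_eq_add'.2 hud.symm]
        abel
      have hsnd : (∑ i, y i • z i).2 = y := by
        simp only [Prod.snd_sum, hz, Prod.smul_snd]
        ext j
        simp [Pi.single_apply, Finset.sum_ite_eq]
      exact Prod.ext hfst.symm hsnd.symm
    rw [hxy]
    exact hcm
end
end

section
/- Let (C^1, …, C^k) be an admissible family in ℝ^n and let b^i ∈ C^i for each i. Then the affine hull of Q(C^1,…,C^k) equals {(x, y) ∈ ℝ^n × ℝ^k : Σ_{i=1}^k y_i = 1 and x − Σ_{i=1}^k y_i b^i ∈ L(C^1,…,C^k)}, where L(C^1,…,C^k) := L(C^1) + … + L(C^k). -/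
/-!
Every point `(x, eⁱ)` with `x ∈ Cⁱ` satisfies both linear conditions, and these cut out an affine
subspace, so the affine hull is contained in the right-hand side. Conversely, the differences
`(x, eⁱ) - (x', eⁱ) = (x - x', 0)` span `L(Cⁱ) × {0}` inside the direction of the hull, and the
affine combination `∑ yᵢ (bⁱ, eⁱ) = (∑ yᵢ bⁱ, y)` lies in the hull; a point `(x, y)` of the
right-hand side is the latter translated by `(x - ∑ yᵢ bⁱ, 0)`.
-/

open Pointwise Set

noncomputable section

section

variable {𝕜 E ι : Type*} [Ring 𝕜] [AddCommGroup E] [Module 𝕜 E]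

variable (𝕜) in
/-- The right-hand side of the theorem is the preimage of `L(C¹,…,Cᵏ) × {1}` under this map. -/
def cayleyCoord [Fintype ι] (b : ι → E) : E × (ι → 𝕜) →ₗ[𝕜] E × 𝕜 :=
  (LinearMap.fst 𝕜 E _ - Fintype.linearCombination 𝕜 b ∘ₗ LinearMap.snd 𝕜 E _).prod
    (Fintype.linearCombination 𝕜 1 ∘ₗ LinearMap.snd 𝕜 E _)

@[simp] lemma cayleyCoord_apply [Fintype ι] (b : ι → E) (p : E × (ι → 𝕜)) :
    cayleyCoord 𝕜 b p = (p.1 - ∑ i, p.2 i • b i, ∑ i, p.2 i) := by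
  simp [cayleyCoord, Fintype.linearCombination_apply]

variable [DecidableEq ι]

variable (𝕜) in
def cayleyUnion (C : ι → Set E) : Set (E × (ι → 𝕜)) :=
  ⋃ i, C i ×ˢ {Pi.single i 1}

lemma mk_single_mem_affineSpan_cayleyUnion {C : ι → Set E} {i : ι} {x : E} (hx : x ∈ C i) :
    (x, Pi.single i 1) ∈ affineSpan 𝕜 (cayleyUnion 𝕜 C) :=
  subset_affineSpan 𝕜 _ (mem_iUnion.2 ⟨i, hx, rfl⟩)

lemma map_inl_iSup_direction_le_direction_cayleyUnion (C : ι → Set E) :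
    (⨆ i, (affineSpan 𝕜 (C i)).direction).map (LinearMap.inl 𝕜 E (ι → 𝕜)) ≤
      (affineSpan 𝕜 (cayleyUnion 𝕜 C)).direction := by
  rw [Submodule.map_iSup, iSup_le_iff]
  intro i
  rw [direction_affineSpan, vectorSpan_def, Submodule.map_span_le]
  rintro _ ⟨x, hx, x', hx', rfl⟩
  convert AffineSubspace.vsub_mem_direction (mk_single_mem_affineSpan_cayleyUnion (𝕜 := 𝕜) hx)
    (mk_single_mem_affineSpan_cayleyUnion hx') using 1
  simp

variable [Fintype ι]

lemma mk_sum_smul_mem_affineSpan_cayleyUnion [Nontrivial 𝕜] {C : ι → Set E} {b : ι → E}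
    (hb : ∀ i, b i ∈ C i) {y : ι → 𝕜} (hy : ∑ i, y i = 1) :
    (∑ i, y i • b i, y) ∈ affineSpan 𝕜 (cayleyUnion 𝕜 C) := by
  have h := affineCombination_mem_affineSpan hy fun i ↦ (b i, (Pi.single i 1 : ι → 𝕜))
  rw [Finset.affineCombination_eq_linear_combination _ _ _ hy] at h
  have hrange := range_subset_iff.2 fun i ↦ mk_single_mem_affineSpan_cayleyUnion (𝕜 := 𝕜) (hb i)
  convert affineSpan_le.2 hrange h
    <;> simp [Prod.fst_sum, Prod.snd_sum, ← pi_eq_sum_univ']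

lemma affineSpan_cayleyUnion_le_comap_cayleyCoord {C : ι → Set E} {b : ι → E}
    (hb : ∀ i, b i ∈ C i) :
    affineSpan 𝕜 (cayleyUnion 𝕜 C) ≤
      (AffineSubspace.mk' (0, 1) ((⨆ i, (affineSpan 𝕜 (C i)).direction).prod ⊥)).comap
        (cayleyCoord 𝕜 b).toAffineMap := by
  refine affineSpan_le.2 ?_
  rintro ⟨x, y⟩ hxy
  obtain ⟨i, hx, rfl⟩ : ∃ i, x ∈ C i ∧ y = Pi.single i 1 := by simpa [cayleyUnion] using hxy
  simpa [AffineSubspace.mem_mk', Submodule.mem_prod] using Submodule.mem_iSup_of_mem i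
    (AffineSubspace.vsub_mem_direction (subset_affineSpan 𝕜 _ hx) (subset_affineSpan 𝕜 _ (hb i)))

theorem coe_affineSpan_cayleyUnion [Nontrivial 𝕜] {C : ι → Set E} {b : ι → E}
    (hb : ∀ i, b i ∈ C i) :
    (affineSpan 𝕜 (cayleyUnion 𝕜 C) : Set (E × (ι → 𝕜))) =
      {p | ∑ i, p.2 i = 1 ∧ p.1 - ∑ i, p.2 i • b i ∈ ⨆ i, (affineSpan 𝕜 (C i)).direction} := by
  ext p
  constructor
  · intro hp
    simpa [AffineSubspace.mem_mk', Submodule.mem_prod, sub_eq_zero, and_comm] using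
      affineSpan_cayleyUnion_le_comap_cayleyCoord hb hp
  · rintro ⟨hy, hx⟩
    have hp : p = (p.1 - ∑ i, p.2 i • b i, (0 : ι → 𝕜)) +ᵥ (∑ i, p.2 i • b i, p.2) := by
      refine Prod.ext ?_ ?_ <;> simp
    rw [SetLike.mem_coe, hp]
    exact AffineSubspace.vadd_mem_of_mem_direction
      (map_inl_iSup_direction_le_direction_cayleyUnion C ⟨_, hx, rfl⟩)
      (mk_sum_smul_mem_affineSpan_cayleyUnion hb hy)

end

theorem stmt10_general {n k : ℕ} (C : Fin k → Set (Fin n → ℝ))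
    (b : Fin k → Fin n → ℝ) (hb : ∀ i, b i ∈ C i) :
    (affineSpan ℝ (CayleyQ C) : Set ((Fin n → ℝ) × (Fin k → ℝ))) =
      {p | (∑ i, p.2 i = 1) ∧
        p.1 - ∑ i, p.2 i • b i ∈ (⨆ i, (affineSpan ℝ (C i)).direction : Submodule ℝ (Fin n → ℝ))} := by
  rw [CayleyQ, affineSpan_convexHull]
  exact coe_affineSpan_cayleyUnion hb

/-- The affine hull of the Cayley embedding. Here `L(Cⁱ)` is the direction space of the
affine hull of `Cⁱ`, and `L(C¹,…,Cᵏ)` is the (sup =) sum of these subspaces. -/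
theorem stmt10 {n k : ℕ} (C : Fin k → Set (Fin n → ℝ)) (hC : Admissible C)
    (b : Fin k → Fin n → ℝ) (hb : ∀ i, b i ∈ C i) :
    (affineSpan ℝ (CayleyQ C) : Set ((Fin n → ℝ) × (Fin k → ℝ))) =
      {p | (∑ i, p.2 i = 1) ∧
        p.1 - ∑ i, p.2 i • b i ∈ (⨆ i, (affineSpan ℝ (C i)).direction : Submodule ℝ (Fin n → ℝ))} :=
  stmt10_general C b hb
end
end

section
/- Let (C^1, …, C^k) be an admissible family in ℝ^n, let u ∈ ℝ^n and v ∈ ℝ^k, and let I(u,v) := {i ∈ {1,…,k} : σ_{C^i}(u) + v_i = σ_{Q(C^1,…,C^k)}(u,v)} (equality in the extended reals). Then the exposed face of Q(C^1,…,C^k) in direction (u,v) satisfies F_{Q(C^1,…,C^k)}(u, v) = conv(⋃_{i ∈ I(u,v)} F_{C^i}(u) × {e^i}). -/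
open Pointwise Set

noncomputable section

def dotp {n : ℕ} (u x : Fin n → ℝ) : ℝ := ∑ j, u j * x j

/-- The support function of a set, with values in the extended reals. -/
def supportFn {n : ℕ} (S : Set (Fin n → ℝ)) (u : Fin n → ℝ) : EReal :=
  sSup ((fun x => ((dotp u x : ℝ) : EReal)) '' S)

/-- The support function of a subset of `ℝⁿ × ℝᵏ`. -/
def supportFn2 {n k : ℕ} (Q : Set ((Fin n → ℝ) × (Fin k → ℝ)))
    (u : Fin n → ℝ) (v : Fin k → ℝ) : EReal :=
  sSup ((fun p => ((dotp u p.1 + dotp v p.2 : ℝ) : EReal)) '' Q)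

/-- The face of `S` exposed by `u`. -/
def exposedFace {n : ℕ} (S : Set (Fin n → ℝ)) (u : Fin n → ℝ) : Set (Fin n → ℝ) :=
  {x ∈ S | ((dotp u x : ℝ) : EReal) = supportFn S u}

/-! The functional `φ (x, y) = ⟨u, x⟩ + ⟨v, y⟩` is bounded by `σ_Q(u, v)` on the generating set
`A = ⋃ᵢ Cⁱ × {eⁱ}`, so a convex combination of points of `A` attains `σ_Q(u, v)` only if every
point with positive weight does; hence `F_Q(u, v) = conv {a ∈ A | φ a = σ_Q(u, v)}`. Since
`σ_{Cⁱ}(u) + vᵢ ≤ σ_Q(u, v)`, a point `(x, eⁱ)` of `A` attains `σ_Q(u, v)` exactly when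
`i ∈ I(u, v)` and `x ∈ F_{Cⁱ}(u)`. -/

section LevelSet

variable {𝕜 E : Type*} [Field 𝕜] [LinearOrder 𝕜] [IsStrictOrderedRing 𝕜] [AddCommGroup E]
  [Module 𝕜 E]

theorem sep_convexHull_eq_convexHull_sep_of_le {A : Set E} (φ : E →ₗ[𝕜] 𝕜) {m : 𝕜}
    (hA : ∀ a ∈ A, φ a ≤ m) :
    {p ∈ convexHull 𝕜 A | φ p = m} = convexHull 𝕜 {a ∈ A | φ a = m} := by
  classical
  refine Subset.antisymm ?_ <| convexHull_min (fun a ha => ⟨subset_convexHull 𝕜 A ha.1, ha.2⟩)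
    ((convex_convexHull 𝕜 A).inter (convex_hyperplane φ.isLinear m))
  rintro _ ⟨hp, hφp⟩
  rw [convexHull_eq] at hp
  obtain ⟨ι, t, w, z, hw₀, hw₁, hz, rfl⟩ := hp
  have hφ : ∑ i ∈ t, w i * φ (z i) = ∑ i ∈ t, w i * m := by
    rw [← Finset.sum_mul, hw₁, one_mul, ← hφp, t.centerMass_eq_of_sum_1 _ hw₁, map_sum]
    simp only [map_smul, smul_eq_mul]
  have hzm : ∀ i ∈ t, w i ≠ 0 → φ (z i) = m := fun i hi hwi =>
    mul_left_cancel₀ hwi <| (Finset.sum_eq_sum_iff_of_le fun j hj =>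
      mul_le_mul_of_nonneg_left (hA _ (hz j hj)) (hw₀ j hj)).1 hφ i hi
  rw [← t.centerMass_filter_ne_zero]
  refine Finset.centerMass_mem_convexHull _ (fun i hi => hw₀ i (Finset.mem_filter.1 hi).1) ?_
    fun i hi => ?_
  · rw [Finset.sum_filter_ne_zero, hw₁]
    exact one_pos
  · obtain ⟨hit, hwi⟩ := Finset.mem_filter.1 hi
    exact ⟨hz i hit, hzm i hit hwi⟩

end LevelSet

theorem sep_convexHull_eq_convexHull_sep_of_le_ereal {E : Type*} [AddCommGroup E] [Module ℝ E]
    {A : Set E} (φ : E →ₗ[ℝ] ℝ) {M : EReal} (hA : ∀ a ∈ A, (φ a : EReal) ≤ M) :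
    {p ∈ convexHull ℝ A | (φ p : EReal) = M} = convexHull ℝ {a ∈ A | (φ a : EReal) = M} := by
  induction M using EReal.rec with
  | bot => simp
  | top => simp
  | coe m =>
    simp only [EReal.coe_le_coe_iff, EReal.coe_eq_coe_iff] at hA ⊢
    exact sep_convexHull_eq_convexHull_sep_of_le φ hA

section Cayley

variable {n k : ℕ}

def dotpProd (u : Fin n → ℝ) (v : Fin k → ℝ) : (Fin n → ℝ) × (Fin k → ℝ) →ₗ[ℝ] ℝ :=
  (dotProductBilin ℝ ℝ u).comp (LinearMap.fst ℝ _ _) +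
    (dotProductBilin ℝ ℝ v).comp (LinearMap.snd ℝ _ _)

theorem dotpProd_apply (u : Fin n → ℝ) (v : Fin k → ℝ) (p : (Fin n → ℝ) × (Fin k → ℝ)) :
    dotpProd u v p = dotp u p.1 + dotp v p.2 :=
  rfl

theorem dotp_single (v : Fin k → ℝ) (i : Fin k) : dotp v (Pi.single i 1) = v i := by
  simp [dotp, Pi.single_apply]

variable (C : Fin k → Set (Fin n → ℝ)) (u : Fin n → ℝ) (v : Fin k → ℝ)

theorem mk_single_mem_cayleyQ {i : Fin k} {x : Fin n → ℝ} (hx : x ∈ C i) :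
    (x, Pi.single i 1) ∈ CayleyQ C :=
  subset_convexHull ℝ _ (mem_iUnion.2 ⟨i, by simp [hx]⟩)

theorem supportFn_add_le_supportFn2 (i : Fin k) :
    supportFn (C i) u + ((v i : ℝ) : EReal) ≤ supportFn2 (CayleyQ C) u v := by
  rw [← EReal.le_sub_iff_add_le (.inl (EReal.coe_ne_bot _)) (.inl (EReal.coe_ne_top _))]
  refine sSup_le ?_
  rintro _ ⟨x, hx, rfl⟩
  rw [EReal.le_sub_iff_add_le (.inl (EReal.coe_ne_bot _)) (.inl (EReal.coe_ne_top _)),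
    ← EReal.coe_add, ← dotp_single v i]
  exact le_sSup ⟨_, mk_single_mem_cayleyQ C hx, rfl⟩

theorem coe_dotp_add_eq_supportFn2_iff {i : Fin k} {x : Fin n → ℝ} (hx : x ∈ C i) :
    ((dotp u x + v i : ℝ) : EReal) = supportFn2 (CayleyQ C) u v ↔
      supportFn (C i) u + ((v i : ℝ) : EReal) = supportFn2 (CayleyQ C) u v ∧
        x ∈ exposedFace (C i) u := by
  have hxσ : ((dotp u x : ℝ) : EReal) ≤ supportFn (C i) u := le_sSup ⟨x, hx, rfl⟩
  rw [EReal.coe_add]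
  constructor
  · intro hxM
    have hσM : supportFn (C i) u + ((v i : ℝ) : EReal) = supportFn2 (CayleyQ C) u v :=
      le_antisymm (supportFn_add_le_supportFn2 C u v i) (hxM ▸ add_le_add_left hxσ _)
    refine ⟨hσM, hx, ?_⟩
    have h := congrArg (· - ((v i : ℝ) : EReal)) (hxM.trans hσM.symm)
    simpa only [EReal.add_sub_cancel_right] using h
  · rintro ⟨hσM, -, hxF⟩
    rw [hxF, hσM]

theorem biUnion_exposedFace_prod_eq :
    (⋃ i ∈ {i : Fin k |
        supportFn (C i) u + ((v i : ℝ) : EReal) = supportFn2 (CayleyQ C) u v},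
      (exposedFace (C i) u) ×ˢ ({Pi.single i 1} : Set (Fin k → ℝ))) =
      {a ∈ ⋃ i, (C i) ×ˢ ({Pi.single i 1} : Set (Fin k → ℝ)) |
        (dotpProd u v a : EReal) = supportFn2 (CayleyQ C) u v} := by
  ext ⟨x, y⟩
  simp only [mem_iUnion, mem_ofPred_eq, mem_prod, mem_singleton_iff, exists_prop, dotpProd_apply]
  constructor
  · rintro ⟨i, hσM, hxF, rfl⟩
    refine ⟨⟨i, hxF.1, rfl⟩, ?_⟩
    rw [dotp_single]
    exact (coe_dotp_add_eq_supportFn2_iff C u v hxF.1).2 ⟨hσM, hxF⟩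
  · rintro ⟨⟨i, hx, rfl⟩, hxM⟩
    rw [dotp_single] at hxM
    obtain ⟨hσM, hxF⟩ := (coe_dotp_add_eq_supportFn2_iff C u v hx).1 hxM
    exact ⟨i, hσM, hxF, rfl⟩

end Cayley

theorem stmt14_general {n k : ℕ} (C : Fin k → Set (Fin n → ℝ))
    (u : Fin n → ℝ) (v : Fin k → ℝ) :
    {p ∈ CayleyQ C |
        ((dotp u p.1 + dotp v p.2 : ℝ) : EReal) = supportFn2 (CayleyQ C) u v} =
      convexHull ℝ (⋃ i ∈ {i : Fin k |
          supportFn (C i) u + ((v i : ℝ) : EReal) = supportFn2 (CayleyQ C) u v},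
        (exposedFace (C i) u) ×ˢ ({Pi.single i 1} : Set (Fin k → ℝ))) := by
  rw [biUnion_exposedFace_prod_eq]
  exact sep_convexHull_eq_convexHull_sep_of_le_ereal (dotpProd u v)
    fun a ha => le_sSup (mem_image_of_mem _ (subset_convexHull ℝ _ ha))

/-- The exposed faces of the Cayley embedding:
`F_Q(u,v) = conv(⋃_{i ∈ I(u,v)} F_{Cⁱ}(u) × {eⁱ})`. -/
theorem stmt14 {n k : ℕ} (C : Fin k → Set (Fin n → ℝ)) (hC : Admissible C)
    (u : Fin n → ℝ) (v : Fin k → ℝ) :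
    {p ∈ CayleyQ C |
        ((dotp u p.1 + dotp v p.2 : ℝ) : EReal) = supportFn2 (CayleyQ C) u v} =
      convexHull ℝ (⋃ i ∈ {i : Fin k |
          supportFn (C i) u + ((v i : ℝ) : EReal) = supportFn2 (CayleyQ C) u v},
        (exposedFace (C i) u) ×ˢ ({Pi.single i 1} : Set (Fin k → ℝ))) :=
  stmt14_general C u v
end
end

section
/- Let A be a real m×n matrix, let b^1, …, b^k ∈ ℝ^m, and let P^i := {x ∈ ℝ^n : A x ≤ b^i componentwise}, each assumed nonempty. Let r := rank(A) and ℬ := {B ⊆ {1,…,m} : |B| = r and the submatrix A_B of rows of A indexed by B has rank r}. For B ⊆ {1,…,m} and c ∈ ℝ^m let P(B, c) := {x ∈ ℝ^n : (A x)_ρ ≤ c_ρ for all ρ ∈ B}. Assume that for every c ∈ ℝ^n there exists B ∈ ℬ such that sup{⟨c, x⟩ : x ∈ P(B, b^i)} = sup{⟨c, x⟩ : x ∈ P^i} (equality in the extended reals) for every i ∈ {1,…,k}. Then conv(⋃_{i=1}^k P^i × {e^i}) = {(x, y) ∈ ℝ^n × ℝ^k : y ∈ Δ^k and A x ≤ Σ_{i=1}^k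 y_i b^i componentwise}; that is, formulation (10) is ideal. -/
open Pointwise Set

noncomputable section

/-!
The right-hand side is convex and contains every generator `(x, eⁱ)`, which gives `⊆`.
Conversely, `(x̄, ȳ)` lies in the hull as soon as `x̄ = ∑ ȳᵢ zᵢ` with `zᵢ ∈ Pⁱ`. If there is no
such decomposition, Farkas' lemma gives multipliers `λᵢ ≥ 0` and an objective `c` with
`λᵢᵀ A = ȳᵢ cᵀ` and `∑ λᵢ ⬝ bⁱ < c ⬝ x̄`. For the basis `B` that the hypothesis attaches to `c`,
`A_B` is surjective, so `x̄ = ∑ ȳᵢ xᵢ` with `A_B xᵢ ≤ bⁱ_B`; since `xᵢ` lies in the relaxation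
`P(B, bⁱ)`, `ȳᵢ c ⬝ xᵢ ≤ ȳᵢ sup_{Pⁱ} c ≤ λᵢ ⬝ bⁱ`, and summing over `i` gives the opposite
inequality. Farkas' lemma comes from separating a point from a finitely generated cone, which is
closed by Carathéodory's reduction to linearly independent generators.
-/

namespace PointedCone

variable {ι E : Type*} [AddCommGroup E] [Module ℝ E]

theorem mem_hull_image_finset_iff {v : ι → E} {s : Finset ι} {x : E} :
    x ∈ hull ℝ (v '' s) ↔ ∃ t : ι → ℝ, (∀ i ∈ s, 0 ≤ t i) ∧ ∑ i ∈ s, t i • v i = x := by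
  refine ⟨fun hx => ?_, ?_⟩
  · obtain ⟨c, rfl⟩ := (Submodule.mem_span_image_finset_iff_exists_fun' _).1 hx
    exact ⟨fun i => c i, fun i _ => (c i).2, rfl⟩
  · rintro ⟨t, ht, rfl⟩
    exact Submodule.sum_mem _ fun i hi =>
      smul_mem _ (ht i hi) (subset_hull (mem_image_of_mem v hi))

theorem exists_mem_hull_image_erase [DecidableEq ι] {v : ι → E} {s : Finset ι}
    (hs : ¬LinearIndepOn ℝ v s) {x : E} (hx : x ∈ hull ℝ (v '' s)) :
    ∃ i ∈ s, x ∈ hull ℝ (v '' (s.erase i)) := by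
  obtain ⟨t, ht, rfl⟩ := mem_hull_image_finset_iff.1 hx
  obtain ⟨f, hf, hpos⟩ : ∃ f : ι → ℝ, ∑ i ∈ s, f i • v i = 0 ∧ ∃ i ∈ s, 0 < f i := by
    obtain ⟨f, hf, i, hi, hfi⟩ := not_linearIndepOn_finset_iff.1 hs
    rcases hfi.lt_or_gt with hneg | hpos
    · exact ⟨-f, by simp [hf], i, hi, by simpa using hneg⟩
    · exact ⟨f, hf, i, hi, hpos⟩
  obtain ⟨i₀, hi₀, hmin⟩ := (s.filter (0 < f ·)).exists_min_image (fun i => t i / f i)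
    (by simpa [Finset.Nonempty] using hpos)
  rw [Finset.mem_filter] at hi₀
  -- subtract the largest multiple of the relation `f` that keeps the coefficients nonnegative
  set α := t i₀ / f i₀
  have hα : 0 ≤ α := div_nonneg (ht i₀ hi₀.1) hi₀.2.le
  refine ⟨i₀, hi₀.1, mem_hull_image_finset_iff.2 ⟨fun i => t i - α * f i, fun i hi => ?_, ?_⟩⟩
  · have hi := Finset.mem_of_mem_erase hi
    rcases le_or_gt (f i) 0 with hfi | hfi
    · nlinarith [ht i hi]
    · have := hmin i (Finset.mem_filter.2 ⟨hi, hfi⟩)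
      rw [le_div_iff₀ hfi] at this
      linarith
  · rw [Finset.sum_erase _ (by simp [α, hi₀.2.ne'])]
    simp only [sub_smul, mul_smul, Finset.sum_sub_distrib, ← Finset.smul_sum, hf, smul_zero,
      sub_zero]

variable [TopologicalSpace E] [IsTopologicalAddGroup E] [ContinuousSMul ℝ E] [T2Space E]

theorem isClosed_hull_image_of_linearIndepOn {v : ι → E} {s : Finset ι}
    (hs : LinearIndepOn ℝ v s) : IsClosed (hull ℝ (v '' s) : Set E) := by
  set L := Fintype.linearCombination ℝ (fun i : s => v i)
  have hL : Topology.IsClosedEmbedding L := LinearMap.isClosedEmbedding_of_injective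
    (LinearMap.ker_eq_bot.2 (linearIndependent_iff_injective_fintypeLinearCombination.1 hs))
  have : (hull ℝ (v '' s) : Set E) = L '' Ici 0 := by
    ext x
    rw [SetLike.mem_coe, Submodule.mem_span_image_finset_iff_exists_fun]
    simp only [mem_image, mem_Ici, L, Fintype.linearCombination_apply]
    constructor
    · rintro ⟨c, rfl⟩
      exact ⟨fun i => c i, fun i => (c i).2, rfl⟩
    · rintro ⟨t, ht, rfl⟩
      exact ⟨fun i => ⟨t i, ht i⟩, rfl⟩
  rw [this]
  exact hL.isClosedMap _ isClosed_Ici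

theorem isClosed_hull_image_finset (v : ι → E) (s : Finset ι) :
    IsClosed (hull ℝ (v '' s) : Set E) := by
  classical
  induction s using Finset.strongInduction with
  | H s ih =>
    by_cases hs : LinearIndepOn ℝ v s
    · exact isClosed_hull_image_of_linearIndepOn hs
    have : (hull ℝ (v '' s) : Set E) = ⋃ i ∈ s, hull ℝ (v '' (s.erase i)) := by
      refine subset_antisymm (fun x hx => ?_) (iUnion₂_subset fun i _ => ?_)
      · simpa using exists_mem_hull_image_erase hs hx
      · exact Submodule.span_mono (image_mono (Finset.coe_subset.2 (s.erase_subset i)))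
    rw [this]
    exact isClosed_biUnion_finset fun i hi => ih _ (Finset.erase_ssubset hi)

theorem isClosed_hull_of_finite {s : Set E} (hs : s.Finite) : IsClosed (hull ℝ s : Set E) := by
  simpa using isClosed_hull_image_finset id hs.toFinset

end PointedCone

open Matrix

section Farkas

variable {ι κ F : Type*} [Fintype ι] [Fintype κ] [AddCommGroup F] [Module ℝ F]

theorem map_eq_dotProduct_single [DecidableEq ι] {G : Type*} [FunLike G (ι → ℝ) ℝ]
    [LinearMapClass G ℝ (ι → ℝ) ℝ] (f : G) (y : ι → ℝ) :
    f y = (fun i => f (Pi.single i 1)) ⬝ᵥ y := by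
  conv_lhs => rw [← Finset.univ_sum_single y]
  simp only [map_sum, dotProduct]
  refine Finset.sum_congr rfl fun i _ => ?_
  rw [show Pi.single i (y i) = y i • (Pi.single i 1 : ι → ℝ) by simp [← Pi.single_smul], map_smul,
    smul_eq_mul, mul_comm]

theorem farkas (Φ : F →ₗ[ℝ] ι → ℝ) (d : ι → ℝ) (h : ¬∃ z, Φ z ≤ d) :
    ∃ l : ι → ℝ, 0 ≤ l ∧ (∀ z, l ⬝ᵥ Φ z = 0) ∧ l ⬝ᵥ d < 0 := by
  classical
  obtain ⟨S, hS⟩ := IsNoetherian.noetherian (LinearMap.range Φ)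
  set K := PointedCone.hull ℝ ((S : Set (ι → ℝ)) ∪ -S ∪ range fun i => Pi.single i 1)
  have hK_le : ∀ y ∈ K, ∃ z, Φ z ≤ y := by
    intro y hy
    induction hy using Submodule.span_induction with
    | mem y hy =>
      obtain (⟨hy | hy⟩ | ⟨i, rfl⟩) := hy
      · obtain ⟨z, rfl⟩ : y ∈ LinearMap.range Φ := hS ▸ Submodule.subset_span hy
        exact ⟨z, le_rfl⟩
      · obtain ⟨z, hz⟩ : -y ∈ LinearMap.range Φ := hS ▸ Submodule.subset_span hy
        exact ⟨-z, by simp [hz]⟩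
      · exact ⟨0, by simp [Pi.single_nonneg]⟩
    | zero => exact ⟨0, by simp⟩
    | add y y' _ _ hy hy' =>
      obtain ⟨z, hz⟩ := hy
      obtain ⟨z', hz'⟩ := hy'
      exact ⟨z + z', by simpa using add_le_add hz hz'⟩
    | smul a y _ hy =>
      obtain ⟨z, hz⟩ := hy
      exact ⟨(a : ℝ) • z, by simpa using smul_le_smul_of_nonneg_left hz a.2⟩
  have hrange : ∀ z, Φ z ∈ K.lineal := by
    suffices LinearMap.range Φ ≤ K.lineal from fun z => this ⟨z, rfl⟩
    rw [← hS, Submodule.span_le]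
    intro y hy
    exact ⟨PointedCone.subset_hull (Or.inl (Or.inl hy)),
      PointedCone.subset_hull (Or.inl (Or.inr (by simpa using hy)))⟩
  let C : ProperCone ℝ (ι → ℝ) :=
    ⟨K, PointedCone.isClosed_hull_of_finite ((S.finite_toSet.union S.finite_toSet.neg).union
      (finite_range _))⟩
  obtain ⟨f, hfC, hfd⟩ := C.hyperplane_separation_point (x₀ := d) fun hd => h (hK_le d hd)
  refine ⟨fun i => f (Pi.single i 1),
    fun i => hfC _ (PointedCone.subset_hull (Or.inr ⟨i, rfl⟩)), fun z => ?_, ?_⟩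
  · rw [← map_eq_dotProduct_single f]
    have h₁ := hfC _ (hrange z).1
    have h₂ := hfC _ (hrange z).2
    rw [map_neg] at h₂
    exact le_antisymm (by simpa using h₂) h₁
  · rwa [← map_eq_dotProduct_single f]

theorem farkas_mixed (Φ : F →ₗ[ℝ] ι → ℝ) (Ψ : F →ₗ[ℝ] κ → ℝ) (d : ι → ℝ) (e : κ → ℝ)
    (h : ¬∃ z, Φ z ≤ d ∧ Ψ z = e) :
    ∃ (l : ι → ℝ) (ν : κ → ℝ), 0 ≤ l ∧ (∀ z, l ⬝ᵥ Φ z + ν ⬝ᵥ Ψ z = 0) ∧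
      l ⬝ᵥ d + ν ⬝ᵥ e < 0 := by
  let Θ : F →ₗ[ℝ] ι ⊕ κ ⊕ κ → ℝ :=
    (LinearEquiv.sumArrowLequivProdArrow _ _ ℝ ℝ).symm.toLinearMap ∘ₗ Φ.prod
      ((LinearEquiv.sumArrowLequivProdArrow _ _ ℝ ℝ).symm.toLinearMap ∘ₗ Ψ.prod (-Ψ))
  have hΘ (z : F) : Θ z = Sum.elim (Φ z) (Sum.elim (Ψ z) (-Ψ z)) := by
    ext (i | i | i) <;> rfl
  obtain ⟨l, hl0, hlz, hld⟩ := farkas Θ (Sum.elim d (Sum.elim e (-e))) <| by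
    rintro ⟨z, hz⟩
    simp only [hΘ, Sum.elim_le_elim_iff, neg_le_neg_iff] at hz
    exact h ⟨z, hz.1, le_antisymm hz.2.1 hz.2.2⟩
  rw [← Sum.elim_comp_inl_inr l, ← Sum.elim_comp_inl_inr (l ∘ Sum.inr)] at hlz hld
  refine ⟨l ∘ Sum.inl, (l ∘ Sum.inr) ∘ Sum.inl - (l ∘ Sum.inr) ∘ Sum.inr,
    fun i => hl0 (.inl i), fun z => ?_, ?_⟩
  · have := hlz z
    rw [hΘ, sumElim_dotProduct_sumElim, sumElim_dotProduct_sumElim, dotProduct_neg] at this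
    rw [sub_dotProduct]
    linarith
  · rw [sumElim_dotProduct_sumElim, sumElim_dotProduct_sumElim, dotProduct_neg] at hld
    rw [sub_dotProduct]
    linarith

end Farkas

theorem Matrix.mulVec_surjective_of_rank_eq_card {K κ ν : Type*} [Field K] [Fintype κ] [Fintype ν]
    {M : Matrix κ ν K} (h : M.rank = Fintype.card κ) : Function.Surjective M.mulVec := by
  have : LinearMap.range M.mulVecLin = ⊤ :=
    Submodule.eq_top_of_finrank_eq (h.trans (Module.finrank_fintype_fun_eq_card K).symm)
  exact LinearMap.range_eq_top.1 this

theorem Matrix.exists_sum_smul_eq_of_mulVec_le {ι κ ν : Type*} [Fintype ι] [Fintype κ] [Fintype ν]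
    [DecidableEq κ] {M : Matrix κ ν ℝ} (hM : Function.Surjective M.mulVec) {y : ι → ℝ}
    (hy : ∑ i, y i = 1) {β : ι → κ → ℝ} {x : ν → ℝ} (hx : M *ᵥ x ≤ ∑ i, y i • β i) :
    ∃ z : ι → ν → ℝ, (∀ i, M *ᵥ z i ≤ β i) ∧ ∑ i, y i • z i = x := by
  obtain ⟨R, hR⟩ := mulVec_surjective_iff_exists_right_inverse.1 hM
  set s := ∑ i, y i • β i
  refine ⟨fun i => x + R *ᵥ (β i - s), fun i => ?_, ?_⟩
  · rw [mulVec_add, mulVec_mulVec, hR, one_mulVec]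
    simpa using add_le_add_left hx (β i - s)
  · simp_rw [smul_add, Finset.sum_add_distrib, ← Finset.sum_smul, hy, one_smul, ← mulVec_smul,
      ← mulVec_sum, smul_sub, Finset.sum_sub_distrib]
    rw [← Finset.sum_smul, hy, one_smul, sub_self, mulVec_zero, add_zero]

theorem sum_smul_mem_convexHull_iUnion_prod_single {ι E : Type*} [Fintype ι] [DecidableEq ι]
    [AddCommGroup E] [Module ℝ E] {S : ι → Set E} {y : ι → ℝ} (hy0 : 0 ≤ y)
    (hy1 : ∑ i, y i = 1) {z : ι → E} (hz : ∀ i, z i ∈ S i) :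
    (∑ i, y i • z i, y) ∈ convexHull ℝ (⋃ i, S i ×ˢ ({Pi.single i 1} : Set (ι → ℝ))) := by
  have : (∑ i, y i • z i, y) = ∑ i, y i • (z i, (Pi.single i 1 : ι → ℝ)) := by
    ext j
    · simp [Prod.fst_sum]
    · simp [Prod.snd_sum, Finset.sum_apply, Pi.single_apply]
  rw [this]
  exact (convex_convexHull ℝ _).sum_mem (fun i _ => hy0 i) hy1 fun i _ =>
    subset_convexHull ℝ _ (mem_iUnion.2 ⟨i, mk_mem_prod (hz i) (mem_singleton _)⟩)

theorem convex_setOf_mulVec_le_sum_mul {ι κ ν : Type*} [Fintype ι] [Fintype ν]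
    (A : Matrix κ ν ℝ) (b : ι → κ → ℝ) :
    Convex ℝ {p : (ν → ℝ) × (ι → ℝ) | (∀ i, 0 ≤ p.2 i) ∧ (∑ i, p.2 i = 1) ∧
      ∀ ρ, A.mulVec p.1 ρ ≤ ∑ i, p.2 i * b i ρ} := by
  rintro p ⟨hp0, hp1, hpA⟩ q ⟨hq0, hq1, hqA⟩ s t hs ht hst
  refine ⟨fun i => ?_, ?_, fun ρ => ?_⟩
  · simpa using add_nonneg (mul_nonneg hs (hp0 i)) (mul_nonneg ht (hq0 i))
  · simp [Finset.sum_add_distrib, ← Finset.mul_sum, hp1, hq1, hst]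
  · simp only [Prod.fst_add, Prod.smul_fst, Prod.snd_add, Prod.smul_snd, mulVec_add, mulVec_smul,
      Pi.add_apply, Pi.smul_apply, smul_eq_mul, add_mul, mul_assoc, Finset.sum_add_distrib,
      ← Finset.mul_sum]
    exact add_le_add (mul_le_mul_of_nonneg_left (hpA ρ) hs) (mul_le_mul_of_nonneg_left (hqA ρ) ht)

theorem mul_le_of_sSup_image_eq {α : Type*} {f : α → ℝ} {S T : Set α}
    (hST : sSup ((fun x => (f x : EReal)) '' S) = sSup ((fun x => (f x : EReal)) '' T))
    (hT : T.Nonempty) {y C : ℝ} (hy : 0 ≤ y) (hC : ∀ x ∈ T, y * f x ≤ C) {x : α} (hx : x ∈ S) :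
    y * f x ≤ C := by
  rcases hy.eq_or_lt with rfl | hy
  · obtain ⟨x₀, hx₀⟩ := hT
    simpa using hC x₀ hx₀
  have : (f x : EReal) ≤ ((C / y : ℝ) : EReal) :=
    calc (f x : EReal) ≤ sSup ((fun x => (f x : EReal)) '' S) := le_sSup (mem_image_of_mem _ hx)
      _ = sSup ((fun x => (f x : EReal)) '' T) := hST
      _ ≤ _ := sSup_le <| by
        rintro _ ⟨x', hx', rfl⟩
        exact EReal.coe_le_coe_iff.2 ((le_div_iff₀' hy).2 (hC x' hx'))
  rwa [EReal.coe_le_coe_iff, le_div_iff₀' hy] at this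

section CommonBasis

variable {m n k : ℕ} (A : Matrix (Fin m) (Fin n) ℝ) (b : Fin k → Fin m → ℝ)

theorem dotProduct_le_of_common_basis {c : Fin n → ℝ} {B : Finset (Fin m)}
    (hB : Function.Surjective (A.submatrix (fun ρ : B => (ρ : Fin m)) id).mulVec)
    (hsup : ∀ i, sSup ((fun x => ((dotp c x : ℝ) : EReal)) ''
        {x : Fin n → ℝ | ∀ ρ ∈ B, A.mulVec x ρ ≤ b i ρ}) =
      sSup ((fun x => ((dotp c x : ℝ) : EReal)) '' {x | ∀ ρ, A.mulVec x ρ ≤ b i ρ}))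
    (hne : ∀ i, {x | ∀ ρ, A.mulVec x ρ ≤ b i ρ}.Nonempty)
    {x : Fin n → ℝ} {y : Fin k → ℝ} (hy0 : 0 ≤ y) (hy1 : ∑ i, y i = 1)
    (hx : ∀ ρ, A.mulVec x ρ ≤ ∑ i, y i * b i ρ)
    {w : Fin k → Fin m → ℝ} (hw0 : ∀ i, 0 ≤ w i) (hw : ∀ i u, w i ⬝ᵥ A *ᵥ u = y i * c ⬝ᵥ u) :
    c ⬝ᵥ x ≤ ∑ i, w i ⬝ᵥ b i := by
  obtain ⟨z, hzB, rfl⟩ := exists_sum_smul_eq_of_mulVec_le hB hy1 (β := fun i ρ => b i ρ)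
    fun ρ => (hx ρ).trans_eq (by simp [Finset.sum_apply])
  have hz (i : Fin k) : y i * c ⬝ᵥ z i ≤ w i ⬝ᵥ b i :=
    mul_le_of_sSup_image_eq (f := dotp c) (hsup i) (hne i) (hy0 i)
      (fun u hu => hw i u ▸ dotProduct_le_dotProduct_of_nonneg_left hu (hw0 i))
      fun ρ hρ => hzB i ⟨ρ, hρ⟩
  simpa [dotProduct_sum, dotProduct_smul] using Finset.sum_le_sum fun i _ => hz i

theorem exists_sum_smul_eq_of_common_basis (hne : ∀ i, {x | ∀ ρ, A.mulVec x ρ ≤ b i ρ}.Nonempty)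
    (hB : ∀ c : Fin n → ℝ, ∃ B : Finset (Fin m), B.card = A.rank ∧
        (A.submatrix (fun ρ : B => (ρ : Fin m)) id).rank = A.rank ∧
        ∀ i, sSup ((fun x => ((dotp c x : ℝ) : EReal)) ''
                {x : Fin n → ℝ | ∀ ρ ∈ B, A.mulVec x ρ ≤ b i ρ}) =
             sSup ((fun x => ((dotp c x : ℝ) : EReal)) '' {x | ∀ ρ, A.mulVec x ρ ≤ b i ρ}))
    {x : Fin n → ℝ} {y : Fin k → ℝ} (hy0 : 0 ≤ y) (hy1 : ∑ i, y i = 1)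
    (hx : ∀ ρ, A.mulVec x ρ ≤ ∑ i, y i * b i ρ) :
    ∃ z : Fin k → Fin n → ℝ, (∀ i ρ, A.mulVec (z i) ρ ≤ b i ρ) ∧ ∑ i, y i • z i = x := by
  by_contra hno
  let Φ : (Fin k → Fin n → ℝ) →ₗ[ℝ] Fin k × Fin m → ℝ :=
    LinearMap.pi fun p => LinearMap.proj p.2 ∘ₗ A.mulVecLin ∘ₗ LinearMap.proj p.1
  let Ψ : (Fin k → Fin n → ℝ) →ₗ[ℝ] Fin n → ℝ := ∑ i, y i • LinearMap.proj i
  obtain ⟨l, ν, hl0, hlz, hld⟩ := farkas_mixed Φ Ψ (fun p => b p.1 p.2) x <| by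
    rintro ⟨z, hz, hzx⟩
    exact hno ⟨z, fun i ρ => hz (i, ρ), by simpa [Ψ] using hzx⟩
  have hw (i : Fin k) (u : Fin n → ℝ) : (fun ρ => l (i, ρ)) ⬝ᵥ A *ᵥ u = y i * (-ν) ⬝ᵥ u := by
    have := hlz (Pi.single i u)
    simp [Φ, Ψ, dotProduct, Fintype.sum_prod_type, Pi.single_apply, apply_ite, ite_apply,
      Finset.mul_sum, mul_left_comm] at this ⊢
    linarith
  obtain ⟨B, hcard, hrank, hsup⟩ := hB (-ν)
  have := dotProduct_le_of_common_basis A b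
    (mulVec_surjective_of_rank_eq_card (by rw [hrank, ← hcard, Fintype.card_coe])) hsup hne hy0 hy1
    hx (fun i ρ => hl0 (i, ρ)) hw
  rw [show l ⬝ᵥ (fun p => b p.1 p.2) = ∑ i, (fun ρ => l (i, ρ)) ⬝ᵥ b i by
    simp [dotProduct, Fintype.sum_prod_type]] at hld
  rw [neg_dotProduct] at this
  linarith

end CommonBasis

/-- Generalization of the Balas–Blair–Jeroslow theorem (Corollary 2): formulation (10) is
ideal for unions of polyhedra with a common basis structure. -/
theorem stmt15 {m n k : ℕ} (A : Matrix (Fin m) (Fin n) ℝ) (b : Fin k → Fin m → ℝ)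
    (P : Fin k → Set (Fin n → ℝ))
    (hP : ∀ i, P i = {x | ∀ ρ, A.mulVec x ρ ≤ b i ρ})
    (hPne : ∀ i, (P i).Nonempty)
    (hB : ∀ c : Fin n → ℝ, ∃ B : Finset (Fin m), B.card = A.rank ∧
        (A.submatrix (fun ρ : B => (ρ : Fin m)) id).rank = A.rank ∧
        ∀ i, sSup ((fun x => ((dotp c x : ℝ) : EReal)) ''
                {x : Fin n → ℝ | ∀ ρ ∈ B, A.mulVec x ρ ≤ b i ρ}) =
             sSup ((fun x => ((dotp c x : ℝ) : EReal)) '' P i)) :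
    convexHull ℝ (⋃ i, (P i) ×ˢ ({Pi.single i 1} : Set (Fin k → ℝ))) =
      {p : (Fin n → ℝ) × (Fin k → ℝ) | (∀ i, 0 ≤ p.2 i) ∧ (∑ i, p.2 i = 1) ∧
        ∀ ρ, A.mulVec p.1 ρ ≤ ∑ i, p.2 i * b i ρ} := by
  obtain rfl : P = fun i => {x | ∀ ρ, A.mulVec x ρ ≤ b i ρ} := funext hP
  refine subset_antisymm (convexHull_min ?_ (convex_setOf_mulVec_le_sum_mul A b)) ?_
  · rintro ⟨x, _⟩ ⟨_, ⟨i, rfl⟩, hx, rfl⟩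
    refine ⟨(Pi.single_nonneg.2 zero_le_one : (0 : Fin k → ℝ) ≤ Pi.single i 1), by simp,
      fun ρ => ?_⟩
    simpa [Pi.single_apply] using hx ρ
  · rintro ⟨x, y⟩ ⟨hy0, hy1, hx⟩
    dsimp only at hy0 hy1 hx
    obtain ⟨z, hz, hzx⟩ := exists_sum_smul_eq_of_common_basis A b hPne hB hy0 hy1 hx
    rw [← hzx]
    exact sum_smul_mem_convexHull_iUnion_prod_single hy0 hy1 hz
end
end
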